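/- arXiv:2402.06278 — 3 statements merged into one kernel-verified Lean document; each statement's English description precedes it below -/
import Mathlib

section
/- Cone of directions around the magnetic field: let b, ξ ∈ ℝ³ with b ≠ 0 and ξ ≠ 0, and set v := |ξ| b + (⟨b,ξ⟩/|ξ|) ξ. Then v ≠ 0, and the angle between v and b, i.e. arccos(⟨v,b⟩/(|v||b|)), is at most arctan(1/(2√2)). -/
/-!
Write `t = ‖ξ‖` and `c = ⟪b, ξ⟫`. Then `t ⟪v, b⟫ = t² ‖b‖² + c²` and `‖v‖² = t² ‖b‖² + 3 c²`, so
`9 (t ⟪v, b⟫)² - 8 t² ‖b‖² ‖v‖² = (t² ‖b‖² - 3 c²)² ≥ 0`. Since `⟪v, b⟫ > 0`, the cosine of the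
angle between `v` and `b` is at least `2 √2 / 3`, and `arccos (2 √2 / 3) = arctan (1 / (2 √2))`.
-/

open Real InnerProductGeometry
open scoped RealInnerProductSpace

theorem InnerProductGeometry.angle_le_arccos_of_mul_le_inner {E : Type*} [NormedAddCommGroup E]
    [InnerProductSpace ℝ E] {x y : E} {r : ℝ} (hx : x ≠ 0) (hy : y ≠ 0)
    (h : r * (‖x‖ * ‖y‖) ≤ ⟪x, y⟫) : angle x y ≤ arccos r :=
  arccos_le_arccos <| (le_div_iff₀ (by positivity)).2 h

theorem Real.arccos_two_mul_sqrt_two_div_three :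
    arccos (2 * √2 / 3) = arctan (1 / (2 * √2)) := by
  have hsq : (2 * √2 / 3) ^ 2 = 1 - (1 / 3) ^ 2 := by
    rw [div_pow, mul_pow, sq_sqrt zero_le_two]
    norm_num
  rw [arccos_eq_arctan (by positivity), hsq, sub_sub_cancel, sqrt_sq (by norm_num)]
  field_simp

section GroupVelocity

variable {E : Type*} [NormedAddCommGroup E] [InnerProductSpace ℝ E] {b ξ : E}

noncomputable def groupVelocity (b ξ : E) : E := ‖ξ‖ • b + (⟪b, ξ⟫ / ‖ξ‖) • ξ

theorem norm_mul_inner_groupVelocity (b ξ : E) :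
    ‖ξ‖ * ⟪groupVelocity b ξ, b⟫ = ‖ξ‖ ^ 2 * ‖b‖ ^ 2 + ⟪b, ξ⟫ ^ 2 := by
  rcases eq_or_ne ξ 0 with rfl | hξ
  · simp
  have ht : ‖ξ‖ ≠ 0 := norm_ne_zero_iff.mpr hξ
  rw [groupVelocity, inner_add_left, real_inner_smul_left, real_inner_smul_left,
    real_inner_self_eq_norm_sq, real_inner_comm ξ b]
  field_simp

theorem norm_groupVelocity_sq (b ξ : E) :
    ‖groupVelocity b ξ‖ ^ 2 = ‖ξ‖ ^ 2 * ‖b‖ ^ 2 + 3 * ⟪b, ξ⟫ ^ 2 := by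
  rcases eq_or_ne ξ 0 with rfl | hξ
  · simp [groupVelocity]
  have ht : ‖ξ‖ ≠ 0 := norm_ne_zero_iff.mpr hξ
  rw [groupVelocity, norm_add_sq_real, norm_smul, norm_smul, real_inner_smul_left,
    real_inner_smul_right, norm_div, norm_norm, Real.norm_eq_abs, mul_pow, mul_pow, div_pow,
    sq_abs]
  field_simp
  ring

theorem inner_groupVelocity_pos (hb : b ≠ 0) (hξ : ξ ≠ 0) : 0 < ⟪groupVelocity b ξ, b⟫ := by
  have ht : 0 < ‖ξ‖ := norm_pos_iff.mpr hξ
  have hB : 0 < ‖b‖ := norm_pos_iff.mpr hb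
  refine pos_of_mul_pos_right ?_ ht.le
  rw [norm_mul_inner_groupVelocity]
  positivity

theorem groupVelocity_ne_zero (hb : b ≠ 0) (hξ : ξ ≠ 0) : groupVelocity b ξ ≠ 0 := by
  intro h
  simpa [h] using inner_groupVelocity_pos hb hξ

theorem eight_mul_sq_norm_mul_norm_le (hξ : ξ ≠ 0) :
    8 * (‖groupVelocity b ξ‖ * ‖b‖) ^ 2 ≤ 9 * ⟪groupVelocity b ξ, b⟫ ^ 2 := by
  have ht : 0 < ‖ξ‖ ^ 2 := by
    have := norm_pos_iff.mpr hξ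
    positivity
  refine le_of_mul_le_mul_left ?_ ht
  calc ‖ξ‖ ^ 2 * (8 * (‖groupVelocity b ξ‖ * ‖b‖) ^ 2)
      = 8 * (‖ξ‖ ^ 2 * ‖b‖ ^ 2) * ‖groupVelocity b ξ‖ ^ 2 := by ring
    _ ≤ 9 * (‖ξ‖ * ⟪groupVelocity b ξ, b⟫) ^ 2 := by
      rw [norm_groupVelocity_sq, norm_mul_inner_groupVelocity]
      nlinarith [sq_nonneg (‖ξ‖ ^ 2 * ‖b‖ ^ 2 - 3 * ⟪b, ξ⟫ ^ 2)]
    _ = ‖ξ‖ ^ 2 * (9 * ⟪groupVelocity b ξ, b⟫ ^ 2) := by ring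

theorem angle_groupVelocity_le (hb : b ≠ 0) (hξ : ξ ≠ 0) :
    angle (groupVelocity b ξ) b ≤ arctan (1 / (2 * √2)) := by
  rw [← arccos_two_mul_sqrt_two_div_three]
  refine angle_le_arccos_of_mul_le_inner (groupVelocity_ne_zero hb hξ) hb ?_
  refine (abs_le_of_sq_le_sq' ?_ (inner_groupVelocity_pos hb hξ).le).2
  rw [mul_pow, div_pow, mul_pow, sq_sqrt zero_le_two]
  linarith [eight_mul_sq_norm_mul_norm_le (b := b) hξ]

end GroupVelocity

/-- Cone of directions around the magnetic field: for nonzero b, ξ ∈ ℝ³, the group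
velocity v = |ξ|b + (⟨b,ξ⟩/|ξ|)ξ is nonzero and the angle between v and b is at most
arctan(1/(2√2)). -/
theorem cone_of_directions (b ξ : EuclideanSpace ℝ (Fin 3)) (hb : b ≠ 0) (hξ : ξ ≠ 0) :
    ‖ξ‖ • b + ((inner ℝ b ξ : ℝ) / ‖ξ‖) • ξ ≠ 0 ∧
      Real.arccos
          ((inner ℝ (‖ξ‖ • b + ((inner ℝ b ξ : ℝ) / ‖ξ‖) • ξ) b : ℝ) /
            (‖‖ξ‖ • b + ((inner ℝ b ξ : ℝ) / ‖ξ‖) • ξ‖ * ‖b‖))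
        ≤ Real.arctan (1 / (2 * Real.sqrt 2)) :=
  ⟨groupVelocity_ne_zero hb hξ, angle_groupVelocity_le hb hξ⟩
end

section
/- Frequency evolution formula: let B: ℝ³ → ℝ³ be differentiable and let (X, Ξ) be a bicharacteristic associated with p_B. Then for every t ∈ ℝ, the function s ↦ |Ξ(s)| is differentiable at t with derivative −Σ_{α,β} D^{αβ}(X(t)) Ξ_α(t) Ξ_β(t), where D^{αβ} := (1/2)(∂_α B^β + ∂_β B^α) is the deformation tensor of B. -/
/-!
Differentiating `|Ξ|² = ⟨Ξ, Ξ⟩` along the Hamiltonian flow gives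
`d|Ξ|/dt = ⟨Ξ, Ξ̇⟩ / |Ξ| = −Σ (∂_α B^β)(X) Ξ_α Ξ_β`, since the factor `|Ξ|` in `Ξ̇` cancels
the division. A quadratic form only sees the symmetric part of its matrix, so `∂_α B^β` may be
replaced by the deformation tensor `D^{αβ}`.
-/

noncomputable section

/-- ℝ³ with the Euclidean inner product and norm. -/
abbrev E3 : Type := EuclideanSpace ℝ (Fin 3)

/-- `(X, Ξ)` is a bicharacteristic associated with the symbol
`p_B(x,ξ) = (B(x)·ξ)|ξ|`: `Ξ` never vanishes and the Hamiltonian system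
`Ẋ = |Ξ| B(X) + (⟨B(X),Ξ⟩/|Ξ|) Ξ`, `Ξ̇_α = −|Ξ| Σ_β (∂_α B^β)(X) Ξ_β` holds. -/
def IsBicharacteristic (B : E3 → E3) (X Ξ : ℝ → E3) : Prop :=
  (∀ t, Ξ t ≠ 0) ∧
  (∀ t, HasDerivAt X
    (‖Ξ t‖ • B (X t) + ((inner ℝ (B (X t)) (Ξ t) : ℝ) / ‖Ξ t‖) • Ξ t) t) ∧
  (∀ t (α : Fin 3), HasDerivAt (fun s => Ξ s α)
    (-(‖Ξ t‖ * ∑ β : Fin 3,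
        fderiv ℝ B (X t) (EuclideanSpace.single α (1 : ℝ)) β * Ξ t β)) t)

open Finset RealInnerProductSpace

theorem hasDerivAt_euclidean {𝕜 ι : Type*} [RCLike 𝕜] [Fintype ι] {f : 𝕜 → EuclideanSpace 𝕜 ι}
    {f' : EuclideanSpace 𝕜 ι} {x : 𝕜} :
    HasDerivAt f f' x ↔ ∀ i, HasDerivAt (fun s => f s i) (f' i) x := by
  refine ⟨fun h i => ((EuclideanSpace.proj i).hasFDerivAt.comp_hasDerivAt x h :), fun h => ?_⟩
  exact (EuclideanSpace.equiv ι 𝕜).symm.hasFDerivAt.comp_hasDerivAt x (hasDerivAt_pi.2 h)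

theorem HasDerivAt.norm {F : Type*} [NormedAddCommGroup F] [InnerProductSpace ℝ F]
    {f : ℝ → F} {f' : F} {x : ℝ} (hf : HasDerivAt f f' x) (h0 : f x ≠ 0) :
    HasDerivAt (fun s => ‖f s‖) (⟪f x, f'⟫ / ‖f x‖) x := by
  have h := hf.norm_sq.sqrt (by positivity)
  simp only [Real.sqrt_sq (norm_nonneg _)] at h
  convert h using 1
  field_simp

theorem sum_sum_half_add_transpose_mul_mul {ι R : Type*} [Fintype ι] [Field R] [NeZero (2 : R)]
    (A : ι → ι → R) (x : ι → R) :
    ∑ α, ∑ β, 1 / 2 * (A α β + A β α) * x α * x β = ∑ α, ∑ β, A α β * x α * x β := by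
  have htranspose : ∑ α, ∑ β, A β α * x α * x β = ∑ α, ∑ β, A α β * x α * x β := by
    rw [sum_comm]
    simp only [mul_right_comm]
  simp only [mul_add, add_mul, sum_add_distrib, mul_assoc, ← mul_sum] at htranspose ⊢
  rw [htranspose]
  field_simp
  ring

theorem inner_toLp_neg_norm_mul_sum_div_norm {ι : Type*} [Fintype ι] (A : ι → ι → ℝ)
    {ξ : EuclideanSpace ℝ ι} (hξ : ξ ≠ 0) :
    ⟪ξ, WithLp.toLp 2 fun α => -(‖ξ‖ * ∑ β, A α β * ξ β)⟫ / ‖ξ‖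
      = -∑ α, ∑ β, A α β * ξ α * ξ β := by
  have hξ_norm : ‖ξ‖ ≠ 0 := norm_ne_zero_iff.2 hξ
  simp only [PiLp.inner_apply, RCLike.inner_apply, conj_trivial, mul_sum, sum_mul, sum_div,
    ← sum_neg_distrib]
  refine sum_congr rfl fun α _ => sum_congr rfl fun β _ => ?_
  field_simp

theorem frequency_evolution_general (B : E3 → E3)
    (X Ξ : ℝ → E3) (hbc : IsBicharacteristic B X Ξ) (t : ℝ) :
    HasDerivAt (fun s => ‖Ξ s‖)
      (-(∑ α : Fin 3, ∑ β : Fin 3,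
        (1 / 2) * (fderiv ℝ B (X t) (EuclideanSpace.single α (1 : ℝ)) β
            + fderiv ℝ B (X t) (EuclideanSpace.single β (1 : ℝ)) α)
          * Ξ t α * Ξ t β)) t := by
  obtain ⟨hΞ_ne, -, hΞ_deriv⟩ := hbc
  set A : Fin 3 → Fin 3 → ℝ := fun α β => fderiv ℝ B (X t) (EuclideanSpace.single α 1) β
  have hderiv : HasDerivAt Ξ (WithLp.toLp 2 fun α => -(‖Ξ t‖ * ∑ β, A α β * Ξ t β)) t :=
    hasDerivAt_euclidean.2 (hΞ_deriv t)
  rw [sum_sum_half_add_transpose_mul_mul A (Ξ t),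
    ← inner_toLp_neg_norm_mul_sum_div_norm A (hΞ_ne t)]
  exact hderiv.norm (hΞ_ne t)

/-- Frequency evolution formula: along any bicharacteristic of `p_B`, the function
`s ↦ |Ξ(s)|` is differentiable with derivative `−Σ_{α,β} D^{αβ}(X(t)) Ξ_α(t) Ξ_β(t)`,
where `D^{αβ} = (1/2)(∂_α B^β + ∂_β B^α)` is the deformation tensor of `B`. -/
theorem frequency_evolution (B : E3 → E3) (hB : Differentiable ℝ B)
    (X Ξ : ℝ → E3) (hbc : IsBicharacteristic B X Ξ) (t : ℝ) :
    HasDerivAt (fun s => ‖Ξ s‖)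
      (-(∑ α : Fin 3, ∑ β : Fin 3,
        (1 / 2) * (fderiv ℝ B (X t) (EuclideanSpace.single α (1 : ℝ)) β
            + fderiv ℝ B (X t) (EuclideanSpace.single β (1 : ℝ)) α)
          * Ξ t α * Ξ t β)) t :=
  frequency_evolution_general B X Ξ hbc t
end
end

section
/- Frequency comparability under the Takeuchi–Mizohata-type condition: let B: ℝ³ → ℝ³ be differentiable, let (X, Ξ) be a bicharacteristic associated with p_B, and let A > 0. Suppose the function t ↦ ‖DB(X(t))‖ · |Ξ(t)| is integrable over ℝ with ∫_ℝ ‖DB(X(t))‖ |Ξ(t)| dt ≤ A, where ‖DB(x)‖ denotes the operator norm of the Fréchet derivative of B at x. Then |Ξ(t)| ≤ e^A |Ξ(t')| for all t, t' ∈ ℝ. -/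
/-!
Along a bicharacteristic the frequency solves `Ξ̇ = -|Ξ| DB(X)* Ξ`, so
`|d/dt log |Ξ|| ≤ ‖DB(X)‖ |Ξ|`. Integrating this logarithmic derivative between `t'` and `t`
bounds `log |Ξ(t)| - log |Ξ(t')|` by `∫_ℝ ‖DB(X)‖ |Ξ| ≤ A`.
-/

open MeasureTheory

noncomputable section

theorem hasDerivAt_euclidean_of_apply {ι : Type*} [Fintype ι] {f : ℝ → EuclideanSpace ℝ ι}
    {f' : EuclideanSpace ℝ ι} {t : ℝ} (h : ∀ i, HasDerivAt (fun s => f s i) (f' i) t) :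
    HasDerivAt f f' t :=
  (PiLp.continuousLinearEquiv 2 ℝ (fun _ : ι => ℝ)).symm.hasFDerivAt.comp_hasDerivAt t
    (hasDerivAt_pi.2 h)

theorem EuclideanSpace.adjoint_apply {ι : Type*} [Fintype ι] [DecidableEq ι]
    (L : EuclideanSpace ℝ ι →L[ℝ] EuclideanSpace ℝ ι) (ξ : EuclideanSpace ℝ ι) (α : ι) :
    L.adjoint ξ α = ∑ β, L (EuclideanSpace.single α 1) β * ξ β := by
  calc L.adjoint ξ α = inner ℝ (EuclideanSpace.single α 1) (L.adjoint ξ) := by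
        simp [EuclideanSpace.inner_single_left]
    _ = inner ℝ (L (EuclideanSpace.single α 1)) ξ := L.adjoint_inner_right _ _
    _ = ∑ β, L (EuclideanSpace.single α 1) β * ξ β := by simp [PiLp.inner_apply, mul_comm]

theorem sub_le_integral_of_hasDerivAt_of_abs_le {g g' h : ℝ → ℝ}
    (hg : ∀ t, HasDerivAt g (g' t) t) (hle : ∀ t, |g' t| ≤ h t) (hh : Integrable h) (a b : ℝ) :
    g b - g a ≤ ∫ t, h t := by
  have hg'_meas : Measurable g' := by
    rw [show g' = deriv g from funext fun t => (hg t).deriv.symm]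
    exact measurable_deriv g
  have hg'_int : IntervalIntegrable g' volume a b :=
    hh.intervalIntegrable.mono_fun hg'_meas.aestronglyMeasurable.restrict
      (Filter.Eventually.of_forall fun t => by
        simpa only [Real.norm_eq_abs] using (hle t).trans (le_abs_self _))
  calc g b - g a = ∫ t in a..b, g' t :=
        (intervalIntegral.integral_eq_sub_of_hasDerivAt (fun t _ => hg t) hg'_int).symm
    _ ≤ ∫ t in Set.uIoc a b, ‖g' t‖ :=
        (Real.le_norm_self _).trans intervalIntegral.norm_integral_le_integral_norm_uIoc
    _ ≤ ∫ t in Set.uIoc a b, h t :=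
        setIntegral_mono_on hg'_int.norm.def' hh.integrableOn measurableSet_uIoc
          fun t _ => hle t
    _ ≤ ∫ t, h t :=
        setIntegral_le_integral hh
          (Filter.Eventually.of_forall fun t => (abs_nonneg _).trans (hle t))

theorem norm_le_exp_integral_mul_norm {F : Type*} [NormedAddCommGroup F] [InnerProductSpace ℝ F]
    {f f' : ℝ → F} {h : ℝ → ℝ} (hf0 : ∀ t, f t ≠ 0) (hf : ∀ t, HasDerivAt f (f' t) t)
    (hle : ∀ t, ‖f' t‖ ≤ h t * ‖f t‖) (hh : Integrable h) (a b : ℝ) :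
    ‖f b‖ ≤ Real.exp (∫ t, h t) * ‖f a‖ := by
  have hpos : ∀ t, 0 < ‖f t‖ := fun t => norm_pos_iff.2 (hf0 t)
  -- `log ‖f‖` is written as `log (‖f‖ ^ 2) / 2`, since `‖f‖ ^ 2` is smooth everywhere.
  have hlog : ∀ t, HasDerivAt (fun s => Real.log (‖f s‖ ^ 2) / 2)
      (inner ℝ (f t) (f' t) / ‖f t‖ ^ 2) t := fun t =>
    (((hf t).norm_sq.log (pow_pos (hpos t) 2).ne').div_const 2).congr_deriv (by ring)
  have hlog_le : ∀ t, |inner ℝ (f t) (f' t) / ‖f t‖ ^ 2| ≤ h t := fun t => by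
    rw [abs_div, abs_of_pos (pow_pos (hpos t) 2), div_le_iff₀ (pow_pos (hpos t) 2)]
    calc |inner ℝ (f t) (f' t)| ≤ ‖f t‖ * ‖f' t‖ := abs_real_inner_le_norm _ _
      _ ≤ ‖f t‖ * (h t * ‖f t‖) := by gcongr; exact hle t
      _ = h t * ‖f t‖ ^ 2 := by ring
  have hlog_sub := sub_le_integral_of_hasDerivAt_of_abs_le hlog hlog_le hh a b
  simp only [Real.log_pow, Nat.cast_ofNat] at hlog_sub
  calc ‖f b‖ = Real.exp (Real.log ‖f b‖) := (Real.exp_log (hpos b)).symm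
    _ ≤ Real.exp ((∫ t, h t) + Real.log ‖f a‖) := Real.exp_le_exp.2 (by linarith)
    _ = Real.exp (∫ t, h t) * ‖f a‖ := by rw [Real.exp_add, Real.exp_log (hpos a)]

theorem IsBicharacteristic.hasDerivAt_frequency {B : E3 → E3} {X Ξ : ℝ → E3}
    (hbc : IsBicharacteristic B X Ξ) (t : ℝ) :
    HasDerivAt Ξ (-(‖Ξ t‖ • (fderiv ℝ B (X t)).adjoint (Ξ t))) t :=
  hasDerivAt_euclidean_of_apply fun α => by
    simpa [EuclideanSpace.adjoint_apply] using hbc.2.2 t α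

theorem frequency_comparability_general (B : E3 → E3)
    (X Ξ : ℝ → E3) (hbc : IsBicharacteristic B X Ξ) (A : ℝ)
    (hint : Integrable (fun t : ℝ => ‖fderiv ℝ B (X t)‖ * ‖Ξ t‖))
    (hbound : (∫ t : ℝ, ‖fderiv ℝ B (X t)‖ * ‖Ξ t‖) ≤ A) :
    ∀ t t' : ℝ, ‖Ξ t‖ ≤ Real.exp A * ‖Ξ t'‖ := by
  have hderiv_le : ∀ s, ‖-(‖Ξ s‖ • (fderiv ℝ B (X s)).adjoint (Ξ s))‖
      ≤ ‖fderiv ℝ B (X s)‖ * ‖Ξ s‖ * ‖Ξ s‖ := fun s => by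
    rw [norm_neg, norm_smul, norm_norm, mul_comm ‖Ξ s‖]
    gcongr
    simpa using (fderiv ℝ B (X s)).adjoint.le_opNorm (Ξ s)
  intro t t'
  calc ‖Ξ t‖ ≤ Real.exp (∫ s : ℝ, ‖fderiv ℝ B (X s)‖ * ‖Ξ s‖) * ‖Ξ t'‖ :=
        norm_le_exp_integral_mul_norm hbc.1 hbc.hasDerivAt_frequency hderiv_le hint t' t
    _ ≤ Real.exp A * ‖Ξ t'‖ := by gcongr

/-- Frequency comparability under the Takeuchi–Mizohata-type condition: if
`t ↦ ‖DB(X(t))‖ |Ξ(t)|` is integrable over ℝ with integral at most `A`, then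
`|Ξ(t)| ≤ e^A |Ξ(t')|` for all `t, t'`. -/
theorem frequency_comparability (B : E3 → E3) (hB : Differentiable ℝ B)
    (X Ξ : ℝ → E3) (hbc : IsBicharacteristic B X Ξ) (A : ℝ) (hA : 0 < A)
    (hint : Integrable (fun t : ℝ => ‖fderiv ℝ B (X t)‖ * ‖Ξ t‖))
    (hbound : (∫ t : ℝ, ‖fderiv ℝ B (X t)‖ * ‖Ξ t‖) ≤ A) :
    ∀ t t' : ℝ, ‖Ξ t‖ ≤ Real.exp A * ‖Ξ t'‖ :=
  frequency_comparability_general B X Ξ hbc A hint hbound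
end
end
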